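/- arXiv:1404.1443 — 3 statements merged into one kernel-verified Lean document; each statement's English description precedes it below -/
import Mathlib

section
/- Let Y, X_1, …, X_m (m ≥ 1) be zero-mean square-integrable real random variables on a probability space with E[Y²] > 0 and E[X_j²] > 0 for every j, and suppose there is a single ρ ∈ [−1,1] with E[Y·X_j] = ρ·√(E[Y²]·E[X_j²]) for every j. Then the residual variance of Y given (X_1,…,X_m), i.e. inf over (c_1,…,c_m) ∈ ℝ^m of E[(Y − Σ_j c_j X_j)²], is at most E[Y²]·(1 − ρ²); moreover if in addition the X_j are pairwise fully correlated, i.e. E[X_i·X_j] = √(E[X_i²]·E[X_j²]) for all i, j, then this infimum equals E[Y²]·(1 − ρ²). (This is the L² content of Theorem 1: the conditional-entropy term is maximized when the relay outputs are fully correlated.) -/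
open MeasureTheory Finset

lemma l2_mul_int {Ω : Type*} [MeasurableSpace Ω] {μ : Measure Ω} {f g : Ω → ℝ}
    (hf : MemLp f 2 μ) (hg : MemLp g 2 μ) :
    Integrable (fun ω => f ω * g ω) μ := by
  have h := (((hf.add hg).integrable_sq.sub hf.integrable_sq).sub hg.integrable_sq).const_mul
    (1/2 : ℝ)
  refine h.congr (Filter.Eventually.of_forall fun ω => ?_)
  simp only [Pi.sub_apply, Pi.add_apply]
  ring

/-- For zero-mean square-integrable `Y, X₁, …, Xₘ` (m ≥ 1) with positive
second moments and a common correlation `ρ ∈ [-1,1]` between `Y` and each `X j`, the residual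
variance of `Y` given `(X₁,…,Xₘ)` is at most `E[Y²]·(1-ρ²)`, with equality when the `X j`
are pairwise fully correlated. -/
theorem residual_variance_le_of_common_correlation
    {Ω : Type*} [MeasurableSpace Ω] (μ : Measure Ω) [IsProbabilityMeasure μ]
    (m : ℕ) (hm : 1 ≤ m)
    (Y : Ω → ℝ) (X : Fin m → Ω → ℝ)
    (hY2 : MemLp Y 2 μ) (hX2 : ∀ j, MemLp (X j) 2 μ)
    (hY0 : ∫ ω, Y ω ∂μ = 0) (hX0 : ∀ j, ∫ ω, X j ω ∂μ = 0)
    (hYpos : 0 < ∫ ω, Y ω ^ 2 ∂μ) (hXpos : ∀ j, 0 < ∫ ω, X j ω ^ 2 ∂μ)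
    (ρ : ℝ) (hρ : ρ ∈ Set.Icc (-1 : ℝ) 1)
    (hcorr : ∀ j, ∫ ω, Y ω * X j ω ∂μ =
      ρ * Real.sqrt ((∫ ω, Y ω ^ 2 ∂μ) * ∫ ω, X j ω ^ 2 ∂μ)) :
    (⨅ c : Fin m → ℝ, ∫ ω, (Y ω - ∑ j, c j * X j ω) ^ 2 ∂μ) ≤
      (∫ ω, Y ω ^ 2 ∂μ) * (1 - ρ ^ 2) ∧
    ((∀ i j, ∫ ω, X i ω * X j ω ∂μ =
        Real.sqrt ((∫ ω, X i ω ^ 2 ∂μ) * ∫ ω, X j ω ^ 2 ∂μ)) →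
      (⨅ c : Fin m → ℝ, ∫ ω, (Y ω - ∑ j, c j * X j ω) ^ 2 ∂μ) =
        (∫ ω, Y ω ^ 2 ∂μ) * (1 - ρ ^ 2)) := by
  set Y2 : ℝ := ∫ ω, Y ω ^ 2 ∂μ with hY2def
  set Xs : Fin m → ℝ := fun j => Real.sqrt (∫ ω, X j ω ^ 2 ∂μ) with hXsdef
  have hXspos : ∀ j, 0 < Xs j := fun j => Real.sqrt_pos.mpr (hXpos j)
  have hXssq : ∀ j, Xs j ^ 2 = ∫ ω, X j ω ^ 2 ∂μ := fun j =>
    Real.sq_sqrt (hXpos j).le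
  -- MemLp of the linear combination
  have hS : ∀ c : Fin m → ℝ, MemLp (fun ω => ∑ j, c j * X j ω) 2 μ := by
    intro c
    exact memLp_finset_sum Finset.univ (fun j _ => (hX2 j).const_mul (c j))
  -- integrability of products
  have hYX : ∀ j, Integrable (fun ω => Y ω * X j ω) μ := fun j => l2_mul_int hY2 (hX2 j)
  have hXX : ∀ i j, Integrable (fun ω => X i ω * X j ω) μ := fun i j =>
    l2_mul_int (hX2 i) (hX2 j)
  -- expansion of the quadratic
  have expand : ∀ c : Fin m → ℝ,
      ∫ ω, (Y ω - ∑ j, c j * X j ω) ^ 2 ∂μ =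
        Y2 - 2 * (∑ j, c j * ∫ ω, Y ω * X j ω ∂μ)
          + ∑ i, ∑ j, c i * c j * ∫ ω, X i ω * X j ω ∂μ := by
    intro c
    have hint1 : Integrable (fun ω => Y ω * ∑ j, c j * X j ω) μ :=
      l2_mul_int hY2 (hS c)
    have hint2 : Integrable (fun ω => (∑ j, c j * X j ω) ^ 2) μ :=
      (hS c).integrable_sq
    have heq : ∀ ω, (Y ω - ∑ j, c j * X j ω) ^ 2 =
        Y ω ^ 2 - 2 * (Y ω * ∑ j, c j * X j ω) + (∑ j, c j * X j ω) ^ 2 := by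
      intro ω; ring
    have hint1' : Integrable (fun ω => 2 * (Y ω * ∑ j, c j * X j ω)) μ :=
      hint1.const_mul 2
    have hint3 : Integrable (fun ω => Y ω ^ 2 - 2 * (Y ω * ∑ j, c j * X j ω)) μ :=
      hY2.integrable_sq.sub hint1'
    rw [MeasureTheory.integral_congr_ae (Filter.Eventually.of_forall heq),
      integral_add hint3 hint2,
      integral_sub hY2.integrable_sq hint1',
      integral_const_mul]
    congr 1
    · congr 2
      · -- ∫ Y * S = Σ c j ∫ Y X j
        have : ∀ ω, Y ω * ∑ j, c j * X j ω = ∑ j, c j * (Y ω * X j ω) := by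
          intro ω; rw [Finset.mul_sum]; exact Finset.sum_congr rfl fun j _ => by ring
        rw [MeasureTheory.integral_congr_ae (Filter.Eventually.of_forall this),
          integral_finset_sum _ (fun j _ => (hYX j).const_mul (c j))]
        exact Finset.sum_congr rfl fun j _ => integral_const_mul _ _
    · -- ∫ S² = Σ Σ
      have : ∀ ω, (∑ j, c j * X j ω) ^ 2 =
          ∑ i, ∑ j, (c i * c j) * (X i ω * X j ω) := by
        intro ω
        rw [sq, Finset.sum_mul_sum]
        exact Finset.sum_congr rfl fun i _ => Finset.sum_congr rfl fun j _ => by ring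
      rw [MeasureTheory.integral_congr_ae (Filter.Eventually.of_forall this),
        integral_finset_sum _ (fun i _ =>
          integrable_finset_sum _ (fun j _ => (hXX i j).const_mul _))]
      refine Finset.sum_congr rfl fun i _ => ?_
      rw [integral_finset_sum _ (fun j _ => (hXX i j).const_mul _)]
      exact Finset.sum_congr rfl fun j _ => integral_const_mul _ _
  have hcorr' : ∀ j, ∫ ω, Y ω * X j ω ∂μ = ρ * Real.sqrt Y2 * Xs j := by
    intro j
    rw [hcorr j, Real.sqrt_mul hYpos.le]
    ring
  -- bounded below
  have hbdd : BddBelow (Set.range fun c : Fin m → ℝ =>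
      ∫ ω, (Y ω - ∑ j, c j * X j ω) ^ 2 ∂μ) := by
    refine ⟨0, ?_⟩
    rintro x ⟨c, rfl⟩
    exact integral_nonneg fun ω => sq_nonneg _
  have hle : (⨅ c : Fin m → ℝ, ∫ ω, (Y ω - ∑ j, c j * X j ω) ^ 2 ∂μ) ≤
      Y2 * (1 - ρ ^ 2) := by
    set j0 : Fin m := ⟨0, hm⟩
    set c : Fin m → ℝ := fun j => if j = j0 then ρ * Real.sqrt Y2 / Xs j0 else 0 with hc
    refine le_trans (ciInf_le hbdd c) ?_
    rw [expand c]
    have hsum1 : (∑ j, c j * ∫ ω, Y ω * X j ω ∂μ) = ρ ^ 2 * Y2 := by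
      rw [Finset.sum_eq_single j0]
      · rw [hcorr' j0]
        simp only [hc, if_pos rfl]
        have hs : Real.sqrt Y2 * Real.sqrt Y2 = Y2 := Real.mul_self_sqrt hYpos.le
        have hx : Xs j0 ≠ 0 := (hXspos j0).ne'
        field_simp
        linear_combination ρ ^ 2 * hs
      · intro b _ hb; simp [hc, hb]
      · intro h; exact absurd (Finset.mem_univ j0) h
    have hsum2 : (∑ i, ∑ j, c i * c j * ∫ ω, X i ω * X j ω ∂μ) = ρ ^ 2 * Y2 := by
      rw [Finset.sum_eq_single j0]
      · rw [Finset.sum_eq_single j0]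
        · simp only [hc, if_pos rfl]
          have : ∫ ω, X j0 ω * X j0 ω ∂μ = Xs j0 ^ 2 := by
            rw [hXssq]
            exact MeasureTheory.integral_congr_ae (Filter.Eventually.of_forall fun ω => (sq _).symm)
          rw [this]
          have hs : Real.sqrt Y2 * Real.sqrt Y2 = Y2 := Real.mul_self_sqrt hYpos.le
          have hx : Xs j0 ≠ 0 := (hXspos j0).ne'
          field_simp
          linear_combination ρ ^ 2 * hs
        · intro b _ hb; simp [hc, hb]
        · intro h; exact absurd (Finset.mem_univ j0) h
      · intro b _ hb; simp [hc, hb]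
      · intro h; exact absurd (Finset.mem_univ j0) h
    rw [hsum1, hsum2]; linarith
  refine ⟨hle, fun hfull => ?_⟩
  refine le_antisymm hle (le_ciInf fun c => ?_)
  rw [expand c]
  set t : ℝ := ∑ j, c j * Xs j with ht
  have h1 : (∑ j, c j * ∫ ω, Y ω * X j ω ∂μ) = ρ * Real.sqrt Y2 * t := by
    rw [ht, Finset.mul_sum]
    exact Finset.sum_congr rfl fun j _ => by rw [hcorr' j]; ring
  have h2 : (∑ i, ∑ j, c i * c j * ∫ ω, X i ω * X j ω ∂μ) = t ^ 2 := by
    rw [ht, sq, Finset.sum_mul_sum]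
    refine Finset.sum_congr rfl fun i _ => Finset.sum_congr rfl fun j _ => ?_
    rw [hfull i j, Real.sqrt_mul (hXpos i).le]
    ring
  rw [h1, h2]
  have hY2sq : Real.sqrt Y2 ^ 2 = Y2 := Real.sq_sqrt hYpos.le
  nlinarith [sq_nonneg (t - ρ * Real.sqrt Y2)]
end

section
/- In the relay network model, fix k ∈ R and let r_d = Y_d − (E[Y_d·X_k]/P_k)·X_k and r_k = Y_k − (E[Y_k·X_k]/P_k)·X_k be the L² projection errors of Y_d and Y_k onto the span of X_k. Then the 2×2 residual Gram determinant satisfies E[r_d²]·E[r_k²] − (E[r_d·r_k])² = σ²·((h_sd + h_sk)·P_s·(1 − ρ²) + σ²). (This is the covariance evaluation (6b) used in the broadcast cut of Theorem 3.) -/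
open MeasureTheory Finset

/-- In the relay network model, for a fixed relay `k ∈ R`, the 2×2 residual
Gram determinant of the L² projection errors of `Y_d` and `Y_k` onto the span of `X_k`
equals `σ²·((h_sd + h_sk)·P_s·(1 − ρ²) + σ²)` (covariance evaluation (6b)). -/
theorem broadcast_cut_residual_gram_det
    {Ω : Type*} [MeasurableSpace Ω] (μ : Measure Ω) [IsProbabilityMeasure μ]
    {ι : Type*} (R : Finset ι) (hR : R.Nonempty) (k : ι) (hk : k ∈ R)
    (Ps σ2 hsd : ℝ) (P hsk hkd : ι → ℝ)
    (hPs : 0 < Ps) (hσ2 : 0 < σ2) (hhsd : 0 < hsd)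
    (hP : ∀ k ∈ R, 0 < P k) (hhsk : ∀ k ∈ R, 0 < hsk k) (hhkd : ∀ k ∈ R, 0 < hkd k)
    (ρ : ℝ) (hρ : ρ ∈ Set.Icc (-1 : ℝ) 1)
    (Xs Zd : Ω → ℝ) (X Z : ι → Ω → ℝ)
    (hXs2 : MemLp Xs 2 μ) (hZd2 : MemLp Zd 2 μ)
    (hX2 : ∀ k ∈ R, MemLp (X k) 2 μ) (hZ2 : ∀ k ∈ R, MemLp (Z k) 2 μ)
    (hXs0 : ∫ ω, Xs ω ∂μ = 0) (hZd0 : ∫ ω, Zd ω ∂μ = 0)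
    (hX0 : ∀ k ∈ R, ∫ ω, X k ω ∂μ = 0) (hZ0 : ∀ k ∈ R, ∫ ω, Z k ω ∂μ = 0)
    (hXsP : ∫ ω, Xs ω ^ 2 ∂μ = Ps)
    (hXP : ∀ k ∈ R, ∫ ω, X k ω ^ 2 ∂μ = P k)
    (hZv : ∀ k ∈ R, ∫ ω, Z k ω ^ 2 ∂μ = σ2)
    (hZdv : ∫ ω, Zd ω ^ 2 ∂μ = σ2)
    (hZZ : ∀ j ∈ R, ∀ k ∈ R, j ≠ k → ∫ ω, Z j ω * Z k ω ∂μ = 0)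
    (hZdZ : ∀ k ∈ R, ∫ ω, Zd ω * Z k ω ∂μ = 0)
    (hZXs : ∀ k ∈ R, ∫ ω, Z k ω * Xs ω ∂μ = 0)
    (hZX : ∀ k ∈ R, ∀ j ∈ R, ∫ ω, Z k ω * X j ω ∂μ = 0)
    (hZdXs : ∫ ω, Zd ω * Xs ω ∂μ = 0)
    (hZdX : ∀ j ∈ R, ∫ ω, Zd ω * X j ω ∂μ = 0)
    (hXsX : ∀ k ∈ R, ∫ ω, Xs ω * X k ω ∂μ = ρ * Real.sqrt (Ps * P k))
    (hXX : ∀ j ∈ R, ∀ k ∈ R, ∫ ω, X j ω * X k ω ∂μ = Real.sqrt (P j * P k)) :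
    (let Yd : Ω → ℝ := fun ω => Real.sqrt hsd * Xs ω + ∑ j ∈ R, Real.sqrt (hkd j) * X j ω + Zd ω
     let Yk : Ω → ℝ := fun ω => Real.sqrt (hsk k) * Xs ω + Z k ω
     let rd : Ω → ℝ := fun ω => Yd ω - (∫ ω', Yd ω' * X k ω' ∂μ) / P k * X k ω
     let rk : Ω → ℝ := fun ω => Yk ω - (∫ ω', Yk ω' * X k ω' ∂μ) / P k * X k ω
     (∫ ω, rd ω ^ 2 ∂μ) * (∫ ω, rk ω ^ 2 ∂μ) - (∫ ω, rd ω * rk ω ∂μ) ^ 2 =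
       σ2 * ((hsd + hsk k) * Ps * (1 - ρ ^ 2) + σ2)) := by
  classical
  have hPk := hP k hk
  have hXk2 := hX2 k hk
  -- product of two L² functions is integrable
  have mul_int : ∀ {f g : Ω → ℝ}, MemLp f 2 μ → MemLp g 2 μ →
      Integrable (fun ω => f ω * g ω) μ := by
    intro f g hf hg
    have h : MemLp (f • g) 1 μ := hg.smul hf
    have := h.integrable le_rfl
    exact this
  set A := Real.sqrt hsd with hAdef
  set C := Real.sqrt (hsk k) with hCdef
  set b : ι → ℝ := fun j => Real.sqrt (hkd j) with hbdef
  set sp := Real.sqrt Ps with hspdef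
  set q : ι → ℝ := fun j => Real.sqrt (P j) with hqdef
  set T := ∑ j ∈ R, b j * q j with hTdef
  have hA2 : A ^ 2 = hsd := Real.sq_sqrt hhsd.le
  have hC2 : C ^ 2 = hsk k := Real.sq_sqrt (hhsk k hk).le
  have hsp2 : sp ^ 2 = Ps := Real.sq_sqrt hPs.le
  have hqk2 : q k ^ 2 = P k := Real.sq_sqrt hPk.le
  have hqk0 : q k ≠ 0 := ne_of_gt (Real.sqrt_pos.mpr hPk)
  -- base moments in product form
  have mXsXs : ∫ ω, Xs ω * Xs ω ∂μ = Ps := by simpa [pow_two] using hXsP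
  have mXkXk : ∫ ω, X k ω * X k ω ∂μ = P k := by simpa [pow_two] using hXP k hk
  have mZdZd : ∫ ω, Zd ω * Zd ω ∂μ = σ2 := by simpa [pow_two] using hZdv
  have mZkZk : ∫ ω, Z k ω * Z k ω ∂μ = σ2 := by simpa [pow_two] using hZv k hk
  have mXsX : ∀ j ∈ R, ∫ ω, Xs ω * X j ω ∂μ = ρ * (sp * q j) := fun j hj => by
    rw [hXsX j hj, Real.sqrt_mul hPs.le]
  have mXX : ∀ j ∈ R, ∀ l ∈ R, ∫ ω, X j ω * X l ω ∂μ = q j * q l := fun j hj l hl => by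
    rw [hXX j hj l hl, Real.sqrt_mul (hP j hj).le]
  -- names for the two observations
  set Yd : Ω → ℝ := fun ω => A * Xs ω + (∑ j ∈ R, b j * X j ω) + Zd ω with hYd
  set Yk : Ω → ℝ := fun ω => C * Xs ω + Z k ω with hYk
  have hS2 : MemLp (fun ω => ∑ j ∈ R, b j * X j ω) 2 μ :=
    memLp_finset_sum R fun j hj => (hX2 j hj).const_mul (b j)
  have hYd2 : MemLp Yd 2 μ := by
    rw [hYd]; exact ((hXs2.const_mul A).add hS2).add hZd2
  have hYk2 : MemLp Yk 2 μ := by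
    rw [hYk]; exact (hXs2.const_mul C).add (hZ2 k hk)
  -- commutation of integrands
  have comm : ∀ f g : Ω → ℝ, ∫ ω, f ω * g ω ∂μ = ∫ ω, g ω * f ω ∂μ := fun f g =>
    integral_congr_ae (Filter.Eventually.of_forall fun ω => mul_comm _ _)
  -- general second moment expansion of residuals
  have M2 : ∀ (f g e : Ω → ℝ), MemLp f 2 μ → MemLp g 2 μ → MemLp e 2 μ → ∀ c d : ℝ,
      ∫ ω, (f ω - c * e ω) * (g ω - d * e ω) ∂μ
        = (∫ ω, f ω * g ω ∂μ) - c * (∫ ω, e ω * g ω ∂μ) - d * (∫ ω, f ω * e ω ∂μ)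
          + c * d * (∫ ω, e ω * e ω ∂μ) := by
    intro f g e hf hg he c d
    have i1 : Integrable (fun ω => f ω * g ω) μ := mul_int hf hg
    have i2 : Integrable (fun ω => c * (e ω * g ω)) μ := (mul_int he hg).const_mul c
    have i3 : Integrable (fun ω => d * (f ω * e ω)) μ := (mul_int hf he).const_mul d
    have i4 : Integrable (fun ω => c * d * (e ω * e ω)) μ := (mul_int he he).const_mul (c * d)
    have i12 : Integrable (fun ω => f ω * g ω - c * (e ω * g ω)) μ := i1.sub i2
    have i123 : Integrable (fun ω => f ω * g ω - c * (e ω * g ω) - d * (f ω * e ω)) μ := i12.sub i3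
    have e' : (fun ω => (f ω - c * e ω) * (g ω - d * e ω))
        = fun ω => f ω * g ω - c * (e ω * g ω) - d * (f ω * e ω) + c * d * (e ω * e ω) := by
      funext ω; ring
    rw [e', integral_add i123 i4, integral_sub i12 i3, integral_sub i1 i2,
      integral_const_mul, integral_const_mul, integral_const_mul]
  -- helpers for sums
  have sum_factor : ∀ (c : ℝ) (u : Ω → ℝ) (ω : Ω),
      c * (u ω * ∑ j ∈ R, b j * X j ω) = ∑ j ∈ R, c * b j * (u ω * X j ω) := by
    intro c u ω
    rw [Finset.mul_sum, Finset.mul_sum]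
    exact Finset.sum_congr rfl fun j _ => by ring
  have sum_sq : ∀ ω : Ω, (∑ j ∈ R, b j * X j ω) * (∑ j ∈ R, b j * X j ω)
      = ∑ j ∈ R, ∑ l ∈ R, b j * b l * (X j ω * X l ω) := by
    intro ω
    rw [Finset.sum_mul_sum]
    exact Finset.sum_congr rfl fun j _ => Finset.sum_congr rfl fun l _ => by ring
  -- The five basic moments
  have MdX : ∫ ω, Yd ω * X k ω ∂μ = (A * (ρ * sp) + T) * q k := by
    rw [hYd]
    have e' : (fun ω => (A * Xs ω + (∑ j ∈ R, b j * X j ω) + Zd ω) * X k ω)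
        = fun ω => A * (Xs ω * X k ω) + (∑ j ∈ R, b j * (X j ω * X k ω)) + Zd ω * X k ω := by
      funext ω; simp only [add_mul, Finset.sum_mul, mul_assoc]
    have iA : Integrable (fun ω => A * (Xs ω * X k ω)) μ := (mul_int hXs2 hXk2).const_mul A
    have iS : Integrable (fun ω => ∑ j ∈ R, b j * (X j ω * X k ω)) μ :=
      integrable_finset_sum R fun j hj => (mul_int (hX2 j hj) hXk2).const_mul (b j)
    have iZ : Integrable (fun ω => Zd ω * X k ω) μ := mul_int hZd2 hXk2
    have iAS : Integrable (fun ω => A * (Xs ω * X k ω) + ∑ j ∈ R, b j * (X j ω * X k ω)) μ :=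
      iA.add iS
    rw [e', integral_add iAS iZ, integral_add iA iS, integral_const_mul,
      integral_finset_sum R fun j hj => (mul_int (hX2 j hj) hXk2).const_mul (b j),
      mXsX k hk, hZdX k hk]
    have hs : ∑ j ∈ R, ∫ ω, b j * (X j ω * X k ω) ∂μ = ∑ j ∈ R, b j * (q j * q k) :=
      Finset.sum_congr rfl fun j hj => by rw [integral_const_mul, mXX j hj k hk]
    rw [hs, show (∑ j ∈ R, b j * (q j * q k)) = T * q k from by
      rw [hTdef, Finset.sum_mul]; exact Finset.sum_congr rfl fun j _ => by ring]
    ring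
  have MkX : ∫ ω, Yk ω * X k ω ∂μ = C * ρ * sp * q k := by
    rw [hYk]
    have e' : (fun ω => (C * Xs ω + Z k ω) * X k ω)
        = fun ω => C * (Xs ω * X k ω) + Z k ω * X k ω := by
      funext ω; ring
    have iA : Integrable (fun ω => C * (Xs ω * X k ω)) μ := (mul_int hXs2 hXk2).const_mul C
    have iZ : Integrable (fun ω => Z k ω * X k ω) μ := mul_int (hZ2 k hk) hXk2
    rw [e', integral_add iA iZ, integral_const_mul, mXsX k hk, hZX k hk k hk]
    ring
  have Mkk : ∫ ω, Yk ω * Yk ω ∂μ = C ^ 2 * Ps + σ2 := by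
    rw [hYk]
    have e' : (fun ω => (C * Xs ω + Z k ω) * (C * Xs ω + Z k ω))
        = fun ω => C * C * (Xs ω * Xs ω) + 2 * C * (Z k ω * Xs ω) + Z k ω * Z k ω := by
      funext ω; ring
    have i1 : Integrable (fun ω => C * C * (Xs ω * Xs ω)) μ :=
      (mul_int hXs2 hXs2).const_mul (C * C)
    have i2 : Integrable (fun ω => 2 * C * (Z k ω * Xs ω)) μ :=
      (mul_int (hZ2 k hk) hXs2).const_mul (2 * C)
    have i3 : Integrable (fun ω => Z k ω * Z k ω) μ := mul_int (hZ2 k hk) (hZ2 k hk)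
    have i12 : Integrable (fun ω => C * C * (Xs ω * Xs ω) + 2 * C * (Z k ω * Xs ω)) μ := i1.add i2
    rw [e', integral_add i12 i3, integral_add i1 i2, integral_const_mul, integral_const_mul,
      mXsXs, hZXs k hk, mZkZk]
    ring
  have Mdk : ∫ ω, Yd ω * Yk ω ∂μ = A * C * Ps + C * ρ * sp * T := by
    rw [hYd, hYk]
    have e' : (fun ω => (A * Xs ω + (∑ j ∈ R, b j * X j ω) + Zd ω) * (C * Xs ω + Z k ω))
        = fun ω => A * C * (Xs ω * Xs ω) + A * (Z k ω * Xs ω)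
          + (∑ j ∈ R, C * b j * (Xs ω * X j ω)) + (∑ j ∈ R, b j * (Z k ω * X j ω))
          + C * (Zd ω * Xs ω) + Zd ω * Z k ω := by
      funext ω
      have h1 := sum_factor C Xs ω
      have h2 : (∑ j ∈ R, b j * X j ω) * Z k ω = ∑ j ∈ R, b j * (Z k ω * X j ω) := by
        rw [Finset.sum_mul]; exact Finset.sum_congr rfl fun j _ => by ring
      calc (A * Xs ω + (∑ j ∈ R, b j * X j ω) + Zd ω) * (C * Xs ω + Z k ω)
          = A * C * (Xs ω * Xs ω) + A * (Z k ω * Xs ω)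
            + C * (Xs ω * ∑ j ∈ R, b j * X j ω) + (∑ j ∈ R, b j * X j ω) * Z k ω
            + C * (Zd ω * Xs ω) + Zd ω * Z k ω := by ring
        _ = _ := by rw [h1, h2]
    have i1 : Integrable (fun ω => A * C * (Xs ω * Xs ω)) μ :=
      (mul_int hXs2 hXs2).const_mul (A * C)
    have i2 : Integrable (fun ω => A * (Z k ω * Xs ω)) μ :=
      (mul_int (hZ2 k hk) hXs2).const_mul A
    have i3 : Integrable (fun ω => ∑ j ∈ R, C * b j * (Xs ω * X j ω)) μ :=
      integrable_finset_sum R fun j hj => (mul_int hXs2 (hX2 j hj)).const_mul (C * b j)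
    have i4 : Integrable (fun ω => ∑ j ∈ R, b j * (Z k ω * X j ω)) μ :=
      integrable_finset_sum R fun j hj => (mul_int (hZ2 k hk) (hX2 j hj)).const_mul (b j)
    have i5 : Integrable (fun ω => C * (Zd ω * Xs ω)) μ := (mul_int hZd2 hXs2).const_mul C
    have i6 : Integrable (fun ω => Zd ω * Z k ω) μ := mul_int hZd2 (hZ2 k hk)
    have i12 : Integrable (fun ω => A * C * (Xs ω * Xs ω) + A * (Z k ω * Xs ω)) μ := i1.add i2
    have i13 : Integrable (fun ω => A * C * (Xs ω * Xs ω) + A * (Z k ω * Xs ω)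
        + ∑ j ∈ R, C * b j * (Xs ω * X j ω)) μ := i12.add i3
    have i14 : Integrable (fun ω => A * C * (Xs ω * Xs ω) + A * (Z k ω * Xs ω)
        + (∑ j ∈ R, C * b j * (Xs ω * X j ω)) + ∑ j ∈ R, b j * (Z k ω * X j ω)) μ := i13.add i4
    have i15 : Integrable (fun ω => A * C * (Xs ω * Xs ω) + A * (Z k ω * Xs ω)
        + (∑ j ∈ R, C * b j * (Xs ω * X j ω)) + (∑ j ∈ R, b j * (Z k ω * X j ω))
        + C * (Zd ω * Xs ω)) μ := i14.add i5
    rw [e', integral_add i15 i6, integral_add i14 i5, integral_add i13 i4, integral_add i12 i3,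
      integral_add i1 i2, integral_const_mul, integral_const_mul, integral_const_mul,
      integral_finset_sum R fun j hj => (mul_int hXs2 (hX2 j hj)).const_mul (C * b j),
      integral_finset_sum R fun j hj => (mul_int (hZ2 k hk) (hX2 j hj)).const_mul (b j),
      mXsXs, hZXs k hk, hZdXs, hZdZ k hk]
    have hs1 : ∑ j ∈ R, ∫ ω, C * b j * (Xs ω * X j ω) ∂μ = ∑ j ∈ R, C * b j * (ρ * (sp * q j)) :=
      Finset.sum_congr rfl fun j hj => by rw [integral_const_mul, mXsX j hj]
    have hs2 : ∑ j ∈ R, ∫ ω, b j * (Z k ω * X j ω) ∂μ = ∑ j ∈ R, (0 : ℝ) :=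
      Finset.sum_congr rfl fun j hj => by rw [integral_const_mul, hZX k hk j hj, mul_zero]
    have hs1' : ∑ j ∈ R, C * b j * (ρ * (sp * q j)) = C * ρ * sp * T := by
      rw [hTdef, Finset.mul_sum]; exact Finset.sum_congr rfl fun j _ => by ring
    rw [hs1, hs2, hs1', Finset.sum_const_zero]
    ring
  have Mdd : ∫ ω, Yd ω * Yd ω ∂μ = A ^ 2 * Ps + 2 * A * ρ * sp * T + T ^ 2 + σ2 := by
    rw [hYd]
    have e' : (fun ω => (A * Xs ω + (∑ j ∈ R, b j * X j ω) + Zd ω)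
            * (A * Xs ω + (∑ j ∈ R, b j * X j ω) + Zd ω))
        = fun ω => A * A * (Xs ω * Xs ω) + (∑ j ∈ R, 2 * A * b j * (Xs ω * X j ω))
          + (∑ j ∈ R, ∑ l ∈ R, b j * b l * (X j ω * X l ω))
          + 2 * A * (Zd ω * Xs ω) + (∑ j ∈ R, 2 * b j * (Zd ω * X j ω)) + Zd ω * Zd ω := by
      funext ω
      have h1 := sum_factor (2 * A) Xs ω
      have h2 := sum_factor 2 Zd ω
      have h3 := sum_sq ω
      calc (A * Xs ω + (∑ j ∈ R, b j * X j ω) + Zd ω)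
            * (A * Xs ω + (∑ j ∈ R, b j * X j ω) + Zd ω)
          = A * A * (Xs ω * Xs ω) + 2 * A * (Xs ω * ∑ j ∈ R, b j * X j ω)
            + (∑ j ∈ R, b j * X j ω) * (∑ j ∈ R, b j * X j ω)
            + 2 * A * (Zd ω * Xs ω) + 2 * (Zd ω * ∑ j ∈ R, b j * X j ω) + Zd ω * Zd ω := by
              ring
        _ = _ := by rw [h1, h2, h3]
    have i1 : Integrable (fun ω => A * A * (Xs ω * Xs ω)) μ :=
      (mul_int hXs2 hXs2).const_mul (A * A)
    have i2 : Integrable (fun ω => ∑ j ∈ R, 2 * A * b j * (Xs ω * X j ω)) μ :=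
      integrable_finset_sum R fun j hj => (mul_int hXs2 (hX2 j hj)).const_mul (2 * A * b j)
    have i3 : Integrable (fun ω => ∑ j ∈ R, ∑ l ∈ R, b j * b l * (X j ω * X l ω)) μ :=
      integrable_finset_sum R fun j hj => integrable_finset_sum R fun l hl =>
        (mul_int (hX2 j hj) (hX2 l hl)).const_mul (b j * b l)
    have i4 : Integrable (fun ω => 2 * A * (Zd ω * Xs ω)) μ :=
      (mul_int hZd2 hXs2).const_mul (2 * A)
    have i5 : Integrable (fun ω => ∑ j ∈ R, 2 * b j * (Zd ω * X j ω)) μ :=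
      integrable_finset_sum R fun j hj => (mul_int hZd2 (hX2 j hj)).const_mul (2 * b j)
    have i6 : Integrable (fun ω => Zd ω * Zd ω) μ := mul_int hZd2 hZd2
    have i12 : Integrable (fun ω => A * A * (Xs ω * Xs ω)
        + ∑ j ∈ R, 2 * A * b j * (Xs ω * X j ω)) μ := i1.add i2
    have i13 : Integrable (fun ω => A * A * (Xs ω * Xs ω)
        + (∑ j ∈ R, 2 * A * b j * (Xs ω * X j ω))
        + ∑ j ∈ R, ∑ l ∈ R, b j * b l * (X j ω * X l ω)) μ := i12.add i3
    have i14 : Integrable (fun ω => A * A * (Xs ω * Xs ω)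
        + (∑ j ∈ R, 2 * A * b j * (Xs ω * X j ω))
        + (∑ j ∈ R, ∑ l ∈ R, b j * b l * (X j ω * X l ω))
        + 2 * A * (Zd ω * Xs ω)) μ := i13.add i4
    have i15 : Integrable (fun ω => A * A * (Xs ω * Xs ω)
        + (∑ j ∈ R, 2 * A * b j * (Xs ω * X j ω))
        + (∑ j ∈ R, ∑ l ∈ R, b j * b l * (X j ω * X l ω))
        + 2 * A * (Zd ω * Xs ω) + ∑ j ∈ R, 2 * b j * (Zd ω * X j ω)) μ := i14.add i5
    rw [e', integral_add i15 i6, integral_add i14 i5, integral_add i13 i4, integral_add i12 i3,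
      integral_add i1 i2, integral_const_mul, integral_const_mul,
      integral_finset_sum R fun j hj => (mul_int hXs2 (hX2 j hj)).const_mul (2 * A * b j),
      integral_finset_sum R fun j hj => (integrable_finset_sum R fun l hl =>
        (mul_int (hX2 j hj) (hX2 l hl)).const_mul (b j * b l)),
      integral_finset_sum R fun j hj => (mul_int hZd2 (hX2 j hj)).const_mul (2 * b j),
      mXsXs, hZdXs, mZdZd]
    have hs1 : ∑ j ∈ R, ∫ ω, 2 * A * b j * (Xs ω * X j ω) ∂μ
        = ∑ j ∈ R, 2 * A * b j * (ρ * (sp * q j)) :=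
      Finset.sum_congr rfl fun j hj => by rw [integral_const_mul, mXsX j hj]
    have hs2 : ∑ j ∈ R, ∫ ω, (∑ l ∈ R, b j * b l * (X j ω * X l ω)) ∂μ
        = ∑ j ∈ R, ∑ l ∈ R, b j * b l * (q j * q l) := by
      refine Finset.sum_congr rfl fun j hj => ?_
      rw [integral_finset_sum R fun l hl => (mul_int (hX2 j hj) (hX2 l hl)).const_mul (b j * b l)]
      exact Finset.sum_congr rfl fun l hl => by rw [integral_const_mul, mXX j hj l hl]
    have hs3 : ∑ j ∈ R, ∫ ω, 2 * b j * (Zd ω * X j ω) ∂μ = ∑ j ∈ R, (0 : ℝ) :=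
      Finset.sum_congr rfl fun j hj => by rw [integral_const_mul, hZdX j hj, mul_zero]
    have hs1' : ∑ j ∈ R, 2 * A * b j * (ρ * (sp * q j)) = 2 * A * ρ * sp * T := by
      rw [hTdef, Finset.mul_sum]; exact Finset.sum_congr rfl fun j _ => by ring
    have hs2' : ∑ j ∈ R, ∑ l ∈ R, b j * b l * (q j * q l) = T * T := by
      rw [hTdef, Finset.sum_mul_sum]
      exact Finset.sum_congr rfl fun j _ => Finset.sum_congr rfl fun l _ => by ring
    rw [hs1, hs2, hs3, hs1', hs2', Finset.sum_const_zero]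
    ring
  -- assemble
  have final :
      (∫ ω, (Yd ω - (∫ ω', Yd ω' * X k ω' ∂μ) / P k * X k ω) ^ 2 ∂μ)
          * (∫ ω, (Yk ω - (∫ ω', Yk ω' * X k ω' ∂μ) / P k * X k ω) ^ 2 ∂μ)
        - (∫ ω, (Yd ω - (∫ ω', Yd ω' * X k ω' ∂μ) / P k * X k ω)
            * (Yk ω - (∫ ω', Yk ω' * X k ω' ∂μ) / P k * X k ω) ∂μ) ^ 2
        = σ2 * ((hsd + hsk k) * Ps * (1 - ρ ^ 2) + σ2) := by
    have e1 : ∫ ω, (Yd ω - (∫ ω', Yd ω' * X k ω' ∂μ) / P k * X k ω) ^ 2 ∂μ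
        = ∫ ω, (Yd ω - (∫ ω', Yd ω' * X k ω' ∂μ) / P k * X k ω)
            * (Yd ω - (∫ ω', Yd ω' * X k ω' ∂μ) / P k * X k ω) ∂μ :=
      integral_congr_ae (Filter.Eventually.of_forall fun ω => by simp [pow_two])
    have e2 : ∫ ω, (Yk ω - (∫ ω', Yk ω' * X k ω' ∂μ) / P k * X k ω) ^ 2 ∂μ
        = ∫ ω, (Yk ω - (∫ ω', Yk ω' * X k ω' ∂μ) / P k * X k ω)
            * (Yk ω - (∫ ω', Yk ω' * X k ω' ∂μ) / P k * X k ω) ∂μ :=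
      integral_congr_ae (Filter.Eventually.of_forall fun ω => by simp [pow_two])
    rw [e1, e2, M2 Yd Yd (X k) hYd2 hYd2 hXk2, M2 Yk Yk (X k) hYk2 hYk2 hXk2,
      M2 Yd Yk (X k) hYd2 hYk2 hXk2, comm (X k) Yd, comm (X k) Yk,
      Mdd, Mkk, Mdk, MdX, MkX, mXkXk]
    rw [← hA2, ← hC2, ← hsp2, ← hqk2]
    field_simp
    ring
  exact final
end

section
/- Fix a finite nonempty index set R, reals P_s > 0, σ² > 0, P_k > 0 and positive gains h_sd, h_sk, h_kd (k∈R). Define C(x) = (1/2)·log₂(1+x), V(ρ) = h_sd·P_s + Σ_{k∈R} 2ρ·√(h_sd·P_s·h_kd·P_k) + Σ_{j∈R} Σ_{k∈R} √(h_jd·P_j·h_kd·P_k) + σ², and the cutset bound function U(ρ) = min( min_{k∈R} C((h_sd + h_sk)·P_s·(1 − ρ²)/σ²), C((V(ρ) − σ²)/σ²) ) for ρ ∈ [−1,1]. If h_sk·P_s ≤ h_kd·P_k for every k ∈ R (every relay's source-to-relay received power is at most its relay-to-destination received power), then sup_{ρ∈[−1,1]} U(ρ) = C((h_sd + min_{k∈R}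 h_sk)·P_s/σ²), and this supremum is attained at ρ = 0. (This is the 'relays close to the destination' consequence of Theorem 3: the cutset bound reduces to the single-relay broadcast bound of the weakest source-to-relay channel.) -/
open Finset

/-- The Gaussian capacity function `C(x) = (1/2)·log₂(1+x)`. -/
noncomputable def Cg (x : ℝ) : ℝ := 1 / 2 * Real.logb 2 (1 + x)

/-- The destination-observation variance `V(ρ)` of the multiple-access cut. -/
noncomputable def Vma {ι : Type*} (R : Finset ι) (Ps σ2 hsd : ℝ) (P hkd : ι → ℝ)
    (ρ : ℝ) : ℝ :=
  hsd * Ps + (∑ k ∈ R, 2 * ρ * Real.sqrt (hsd * Ps * (hkd k * P k)))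
    + (∑ j ∈ R, ∑ k ∈ R, Real.sqrt (hkd j * P j * (hkd k * P k))) + σ2

/-- The explicit Gaussian cutset upper bound `U(ρ)` of Theorem 3. -/
noncomputable def cutsetU {ι : Type*} (R : Finset ι) (hR : R.Nonempty)
    (Ps σ2 hsd : ℝ) (P hsk hkd : ι → ℝ) (ρ : ℝ) : ℝ :=
  min (R.inf' hR fun k => Cg ((hsd + hsk k) * Ps * (1 - ρ ^ 2) / σ2))
    (Cg ((Vma R Ps σ2 hsd P hkd ρ - σ2) / σ2))

private lemma Cg_le_Cg {x y : ℝ} (hx : (-1:ℝ) < x) (h : x ≤ y) : Cg x ≤ Cg y := by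
  unfold Cg
  gcongr
  · norm_num
  · linarith

/-- If every relay's source-to-relay received power is at most its
relay-to-destination received power (`h_sk·P_s ≤ h_kd·P_k` for all `k ∈ R`), then the cutset
bound `U(ρ)` attains its supremum over `ρ ∈ [−1,1]` at `ρ = 0`, with value
`C((h_sd + min_{k∈R} h_sk)·P_s/σ²)`. -/
theorem cutset_sup_relays_close_to_destination
    {ι : Type*} (R : Finset ι) (hR : R.Nonempty)
    (Ps σ2 hsd : ℝ) (P hsk hkd : ι → ℝ)
    (hPs : 0 < Ps) (hσ2 : 0 < σ2) (hhsd : 0 < hsd)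
    (hP : ∀ k ∈ R, 0 < P k) (hhsk : ∀ k ∈ R, 0 < hsk k) (hhkd : ∀ k ∈ R, 0 < hkd k)
    (hcond : ∀ k ∈ R, hsk k * Ps ≤ hkd k * P k) :
    cutsetU R hR Ps σ2 hsd P hsk hkd 0 = Cg ((hsd + R.inf' hR hsk) * Ps / σ2) ∧
    ∀ ρ ∈ Set.Icc (-1 : ℝ) 1,
      cutsetU R hR Ps σ2 hsd P hsk hkd ρ ≤ cutsetU R hR Ps σ2 hsd P hsk hkd 0 := by
  obtain ⟨k0, hk0R, hk0⟩ := Finset.exists_mem_eq_inf' hR hsk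
  set m := R.inf' hR hsk with hmdef
  have hm : 0 < m := hk0 ▸ hhsk k0 hk0R
  have htargpos : (0:ℝ) < (hsd + m) * Ps / σ2 := by positivity
  -- the broadcast part at ρ = 0
  have hA0 : (R.inf' hR fun k => Cg ((hsd + hsk k) * Ps * (1 - (0:ℝ) ^ 2) / σ2))
      = Cg ((hsd + m) * Ps / σ2) := by
    apply le_antisymm
    · refine le_trans (Finset.inf'_le _ hk0R) ?_
      rw [← hk0]
      norm_num
    · apply Finset.le_inf'
      intro k hk
      apply Cg_le_Cg (by linarith)
      have hmk : m ≤ hsk k := Finset.inf'_le hsk hk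
      have : (hsd + m) * Ps ≤ (hsd + hsk k) * Ps := by nlinarith
      calc (hsd + m) * Ps / σ2 ≤ (hsd + hsk k) * Ps / σ2 := by gcongr
        _ = (hsd + hsk k) * Ps * (1 - (0:ℝ) ^ 2) / σ2 := by ring
  -- the diagonal bound on the double sum
  have hdiag : m * Ps ≤ ∑ j ∈ R, ∑ k ∈ R, Real.sqrt (hkd j * P j * (hkd k * P k)) := by
    have h1 : Real.sqrt (hkd k0 * P k0 * (hkd k0 * P k0)) = hkd k0 * P k0 :=
      Real.sqrt_mul_self (le_of_lt (mul_pos (hhkd k0 hk0R) (hP k0 hk0R)))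
    have h2 : Real.sqrt (hkd k0 * P k0 * (hkd k0 * P k0))
        ≤ ∑ k ∈ R, Real.sqrt (hkd k0 * P k0 * (hkd k * P k)) :=
      Finset.single_le_sum (f := fun k => Real.sqrt (hkd k0 * P k0 * (hkd k * P k))) (fun k _ => Real.sqrt_nonneg _) hk0R
    have h3 : (∑ k ∈ R, Real.sqrt (hkd k0 * P k0 * (hkd k * P k)))
        ≤ ∑ j ∈ R, ∑ k ∈ R, Real.sqrt (hkd j * P j * (hkd k * P k)) :=
      Finset.single_le_sum (f := fun j => ∑ k ∈ R, Real.sqrt (hkd j * P j * (hkd k * P k))) (fun j _ => Finset.sum_nonneg fun k _ => Real.sqrt_nonneg _) hk0R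
    have h4 : m * Ps ≤ hkd k0 * P k0 := by
      rw [hk0]; exact hcond k0 hk0R
    linarith
  -- the MAC part at ρ = 0 dominates the broadcast part
  have hVarg : (hsd + m) * Ps / σ2 ≤ (Vma R Ps σ2 hsd P hkd 0 - σ2) / σ2 := by
    unfold Vma
    have : (hsd + m) * Ps ≤ hsd * Ps + (∑ k ∈ R, 2 * (0:ℝ) * Real.sqrt (hsd * Ps * (hkd k * P k)))
        + (∑ j ∈ R, ∑ k ∈ R, Real.sqrt (hkd j * P j * (hkd k * P k))) + σ2 - σ2 := by
      simp only [mul_zero, zero_mul, Finset.sum_const_zero]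
      nlinarith
    gcongr
  have hval : cutsetU R hR Ps σ2 hsd P hsk hkd 0 = Cg ((hsd + m) * Ps / σ2) := by
    unfold cutsetU
    rw [hA0]
    exact min_eq_left (Cg_le_Cg (by linarith) hVarg)
  refine ⟨hval, ?_⟩
  intro ρ hρ
  obtain ⟨hρ1, hρ2⟩ := hρ
  have hρsq : ρ ^ 2 ≤ 1 := by nlinarith
  rw [hval]
  refine le_trans (min_le_left _ _) (le_trans (Finset.inf'_le _ hk0R) ?_)
  apply Cg_le_Cg
  · have h0 : (0:ℝ) ≤ 1 - ρ ^ 2 := by linarith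
    have hk := hhsk k0 hk0R
    have : (0:ℝ) ≤ (hsd + hsk k0) * Ps * (1 - ρ ^ 2) / σ2 := by positivity
    linarith
  · have h1 : (hsd + hsk k0) * Ps * (1 - ρ ^ 2) ≤ (hsd + m) * Ps := by
      rw [hk0]
      have hA : (0:ℝ) ≤ (hsd + hsk k0) * Ps := by
        have := hhsk k0 hk0R; positivity
      nlinarith [mul_nonneg hA (sq_nonneg ρ)]
    gcongr ?_ / σ2
end
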